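/- Let p > 1 and s ∈ ℂ, and define m_s(fp(p)) = ∫_{(√p−1)²}^{(√p+1)²} x^s · √(((√p+1)² − x)(x − (√p−1)²))/(2πx) dx, where x^s = exp(s·log x) for x > 0. Then m_s(fp(p)) = (p−1)^{1+2s} · m_{−s−1}(fp(p)), where (p−1)^{1+2s} = exp((1+2s)·log(p−1)). -/

import Mathlib

open MeasureTheory Set

/-- Density of the free Poisson (Marchenko–Pastur) distribution `fp(p)` for `p > 1`:
`√(((√p+1)² - x)(x - (√p-1)²))/(2πx)` on `((√p-1)², (√p+1)²)`. -/
noncomputable def fpDensity (p : ℝ) (x : ℝ) : ℝ :=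
  Real.sqrt (((Real.sqrt p + 1) ^ 2 - x) * (x - (Real.sqrt p - 1) ^ 2)) / (2 * Real.pi * x)

/-- The free Poisson (Marchenko–Pastur) distribution `fp(p)` for `p > 1`. -/
noncomputable def fpMeasure (p : ℝ) : Measure ℝ :=
  MeasureTheory.volume.withDensity
    (fun x => ENNReal.ofReal
      ((Set.Ioo ((Real.sqrt p - 1) ^ 2) ((Real.sqrt p + 1) ^ 2)).indicator (fpDensity p) x))

/-- The moment of complex order `s` of `fp(p)`:
`m_s(fp(p)) = ∫ x^s dfp(p)(x)` where `x^s = exp(s · log x)` for `x > 0`. -/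
noncomputable def complexMoment (p : ℝ) (s : ℂ) : ℂ :=
  ∫ x : ℝ, Complex.exp (s * (Real.log x : ℂ)) ∂(fpMeasure p)

/-
The substitution `x ↦ (p-1)²/x` is an involution of the support `((√p-1)², (√p+1)²)` of
`fp(p)`, because the two endpoints multiply to `(p-1)²`. Under it the density transforms as
`f((p-1)²/x) = x/(p-1) · f(x)`, so together with the Jacobian `(p-1)²/x²` the integrand
`x^s f(x)` becomes `(p-1)^{1+2s} x^{-s-1} f(x)`.
-/

lemma fpDensity_nonneg (p : ℝ) {x : ℝ} (hx : 0 ≤ x) : 0 ≤ fpDensity p x := by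
  unfold fpDensity
  positivity

lemma complexMoment_eq_setIntegral (p : ℝ) (s : ℂ) :
    complexMoment p s = ∫ x in Ioo ((Real.sqrt p - 1) ^ 2) ((Real.sqrt p + 1) ^ 2),
      fpDensity p x • Complex.exp (s * (Real.log x : ℂ)) := by
  have hmeas : Measurable (fpDensity p) := by unfold fpDensity; fun_prop
  rw [complexMoment, fpMeasure, ← Function.comp_def ENNReal.ofReal,
    ← indicator_comp_of_zero ENNReal.ofReal_zero,
    withDensity_indicator measurableSet_Ioo,
    integral_withDensity_eq_integral_toReal_smul (f := ENNReal.ofReal ∘ fpDensity p)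
      hmeas.ennreal_ofReal
      (ae_of_all _ fun _ => ENNReal.ofReal_lt_top)]
  refine setIntegral_congr_fun measurableSet_Ioo fun x hx => ?_
  rw [Function.comp_apply, ENNReal.toReal_ofReal
    (fpDensity_nonneg p ((sq_nonneg _).trans hx.1.le))]

theorem setIntegral_Ioo_eq_setIntegral_div {E : Type*} [NormedAddCommGroup E] [NormedSpace ℝ E]
    {a b : ℝ} (ha : 0 < a) (g : ℝ → E) :
    ∫ x in Ioo a b, g x = ∫ x in Ioo a b, (a * b / x ^ 2) • g (a * b / x) := by
  rcases (Ioo a b).eq_empty_or_nonempty with hempty | ⟨x₀, hx₀⟩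
  · simp [hempty]
  have hb : 0 < b := ha.trans (hx₀.1.trans hx₀.2)
  have hpos : ∀ x ∈ Ioo a b, 0 < x := fun x hx => ha.trans hx.1
  have hmaps : MapsTo (fun x => a * b / x) (Ioo a b) (Ioo a b) := fun x hx => by
    constructor
    · rw [lt_div_iff₀ (hpos x hx)]; nlinarith [hx.2]
    · rw [div_lt_iff₀ (hpos x hx)]; nlinarith [hx.1]
  have himage : (fun x => a * b / x) '' Ioo a b = Ioo a b := by
    refine hmaps.image_subset.antisymm fun y hy => ⟨a * b / y, hmaps hy, ?_⟩
    field_simp [(hpos y hy).ne', hb.ne']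
  have hinj : InjOn (fun x => a * b / x) (Ioo a b) := fun x _ y _ hxy => by
    simpa [div_eq_mul_inv, (mul_pos ha hb).ne'] using hxy
  have hderiv : ∀ x ∈ Ioo a b,
      HasDerivWithinAt (fun x => a * b / x) (-(a * b / x ^ 2)) (Ioo a b) x := fun x hx => by
    simpa [div_eq_mul_inv] using
      ((hasDerivAt_inv (hpos x hx).ne').const_mul (a * b)).hasDerivWithinAt
  conv_lhs => rw [← himage]
  rw [integral_image_eq_integral_abs_deriv_smul measurableSet_Ioo hderiv hinj]
  refine setIntegral_congr_fun measurableSet_Ioo fun x hx => ?_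
  rw [abs_neg, abs_of_pos (div_pos (mul_pos ha hb) (pow_pos (hpos x hx) 2))]

lemma sqrt_sub_one_sq_mul_sqrt_add_one_sq {p : ℝ} (hp : 0 ≤ p) :
    (Real.sqrt p - 1) ^ 2 * (Real.sqrt p + 1) ^ 2 = (p - 1) ^ 2 := by
  rw [← mul_pow, mul_comm, ← sq_sub_sq, one_pow, Real.sq_sqrt hp]

lemma fpDensity_sq_div {p x : ℝ} (hp : 1 < p) (hx : 0 < x) :
    fpDensity p ((p - 1) ^ 2 / x) = x / (p - 1) * fpDensity p x := by
  have hc : 0 < p - 1 := by linarith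
  have hprod :
      ((Real.sqrt p + 1) ^ 2 - (p - 1) ^ 2 / x) * ((p - 1) ^ 2 / x - (Real.sqrt p - 1) ^ 2) =
        ((p - 1) / x) ^ 2 * (((Real.sqrt p + 1) ^ 2 - x) * (x - (Real.sqrt p - 1) ^ 2)) := by
    rw [div_pow, ← sqrt_sub_one_sq_mul_sqrt_add_one_sq (by linarith)]
    field_simp
  unfold fpDensity
  rw [hprod, Real.sqrt_mul (sq_nonneg _), Real.sqrt_sq (div_pos hc hx).le]
  field_simp

lemma ofReal_div_mul_exp_log_sq_div (s : ℂ) {c x : ℝ} (hc : 0 < c) (hx : 0 < x) :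
    ((c / x : ℝ) : ℂ) * Complex.exp (s * (Real.log (c ^ 2 / x) : ℂ)) =
      Complex.exp ((1 + 2 * s) * (Real.log c : ℂ)) *
        Complex.exp ((-s - 1) * (Real.log x : ℂ)) := by
  rw [← Real.exp_log (div_pos hc hx), Real.log_div hc.ne' hx.ne', Complex.ofReal_exp,
    Real.log_div (by positivity) hx.ne', Real.log_pow, ← Complex.exp_add, ← Complex.exp_add]
  congr 1
  push_cast
  ring

/-- For `p > 1` and `s ∈ ℂ`, `m_s(fp(p)) = (p-1)^{1+2s} · m_{-s-1}(fp(p))`,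
where `(p-1)^{1+2s} = exp((1+2s)·log(p-1))`. -/
theorem fp_complexMoment_reflection (p : ℝ) (hp : 1 < p) (s : ℂ) :
    complexMoment p s =
      Complex.exp ((1 + 2 * s) * (Real.log (p - 1) : ℂ)) * complexMoment p (-s - 1) := by
  have hc : 0 < p - 1 := by linarith
  have hsqrt : 1 < Real.sqrt p := by simpa using Real.sqrt_lt_sqrt zero_le_one hp
  have ha : 0 < (Real.sqrt p - 1) ^ 2 := pow_pos (by linarith) 2
  rw [complexMoment_eq_setIntegral, complexMoment_eq_setIntegral, ← integral_const_mul,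
    setIntegral_Ioo_eq_setIntegral_div ha, sqrt_sub_one_sq_mul_sqrt_add_one_sq (by linarith)]
  refine setIntegral_congr_fun measurableSet_Ioo fun x hx => ?_
  have hx0 : 0 < x := ha.trans hx.1
  have hweight : (p - 1) ^ 2 / x ^ 2 * (x / (p - 1) * fpDensity p x) =
      fpDensity p x * ((p - 1) / x) := by
    field_simp
  rw [fpDensity_sq_div hp hx0, smul_smul, hweight, mul_smul,
    Complex.real_smul (x := (p - 1) / x), ofReal_div_mul_exp_log_sq_div s hc hx0, mul_smul_comm]
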